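/- (Normalization of Lindley's reference posterior.) Let n ≥ 2 be an integer and let r ∈ (−1,1). Then ∫_{−1}^{1} (1−ρ²)^{(n−3)/2} [ ₂F₁((n−1)/2, (n−1)/2; 1/2; r²ρ²) + 2rρ W_{0,0}(n) ₂F₁(n/2, n/2; 3/2; r²ρ²) ] dρ = B(1/2, (n−1)/2) · ₂F₁((n−1)/2, (n−1)/2; n/2; r²), so that the density π(ρ | n, r) = (1−ρ²)^{(n−3)/2} [ ₂F₁((n−1)/2, (n−1)/2; 1/2; r²ρ²) + 2rρ W_{0,0}(n) ₂F₁(n/2, n/2; 3/2; r²ρ²) ] / [ B(1/2, (n−1)/2) ₂F₁((n−1)/2, (n−1)/2; n/2; r²) ] integrates to 1 over (−1, 1). -/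

import Mathlib

open MeasureTheory Real Set

/-- Pochhammer symbol (rising factorial) `(x)_m`. -/
noncomputable def poch (x : ℝ) (m : ℕ) : ℝ := (ascPochhammer ℝ m).eval x

/-- Confluent hypergeometric function `₁F₁(a; c; z)`. -/
noncomputable def oneF1 (a c z : ℝ) : ℝ :=
  ∑' m : ℕ, poch a m / (poch c m * (m.factorial : ℝ)) * z ^ m

/-- Gauss hypergeometric function `₂F₁(a, b; c; z)`. -/
noncomputable def twoF1 (a b c z : ℝ) : ℝ :=
  ∑' m : ℕ, poch a m * poch b m / (poch c m * (m.factorial : ℝ)) * z ^ m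

/-- Generalized hypergeometric function `₃F₂(a₁, a₂, a₃; b₁, b₂; z)`. -/
noncomputable def threeF2 (a₁ a₂ a₃ b₁ b₂ z : ℝ) : ℝ :=
  ∑' m : ℕ, poch a₁ m * poch a₂ m * poch a₃ m /
      (poch b₁ m * poch b₂ m * (m.factorial : ℝ)) * z ^ m

/-- Beta function `B(u,v) = Γ(u)Γ(v)/Γ(u+v)`. -/
noncomputable def betaFn (u v : ℝ) : ℝ := Real.Gamma u * Real.Gamma v / Real.Gamma (u + v)

/-- `W_{γ,δ}(n)`, the ratio of Gamma functions from the paper. -/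
noncomputable def Wgd (γ δ : ℝ) (n : ℕ) : ℝ :=
  (Real.Gamma (((n : ℝ) - γ) / 2) * Real.Gamma (((n : ℝ) - δ) / 2)) /
    (Real.Gamma (((n : ℝ) - γ - 1) / 2) * Real.Gamma (((n : ℝ) - δ - 1) / 2))

open Filter Topology

/-! ### Auxiliary lemmas -/

lemma poch_zero (x : ℝ) : poch x 0 = 1 := by simp [poch]

lemma poch_succ (x : ℝ) (m : ℕ) : poch x (m + 1) = poch x m * (x + m) := by
  simp [poch, ascPochhammer_succ_eval]

lemma poch_pos {x : ℝ} (hx : 0 < x) (m : ℕ) : 0 < poch x m := by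
  induction m with
  | zero => simp [poch_zero]
  | succ k ih => rw [poch_succ]; positivity

lemma Gamma_poch {x : ℝ} (hx : 0 < x) (m : ℕ) :
    Real.Gamma (x + m) = Real.Gamma x * poch x m := by
  induction m with
  | zero => simp [poch_zero]
  | succ k ih =>
      have h : x + (k + 1 : ℕ) = (x + k) + 1 := by push_cast; ring
      rw [h, Real.Gamma_add_one (by positivity), ih, poch_succ]
      push_cast
      ring

lemma betaFn_pos {u v : ℝ} (hu : 0 < u) (hv : 0 < v) : 0 < betaFn u v := by
  have h1 := Real.Gamma_pos_of_pos hu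
  have h2 := Real.Gamma_pos_of_pos hv
  have h3 := Real.Gamma_pos_of_pos (by linarith : 0 < u + v)
  exact div_pos (mul_pos h1 h2) h3

lemma beta_ratio {a : ℝ} (ha : 0 < a) (m : ℕ) :
    betaFn ((m:ℝ) + 1/2) a = betaFn (1/2) a * (poch (1/2) m / poch (1/2 + a) m) := by
  unfold betaFn
  have e1 : (m:ℝ) + 1/2 = 1/2 + (m:ℝ) := by ring
  have e2 : (1:ℝ)/2 + (m:ℝ) + a = (1/2 + a) + (m:ℝ) := by ring
  rw [e1, e2, Gamma_poch (by norm_num : (0:ℝ) < 1/2) m,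
    Gamma_poch (by positivity : (0:ℝ) < 1/2 + a) m]
  have g1 : Real.Gamma (1/2 + a) ≠ 0 :=
    (Real.Gamma_pos_of_pos (by positivity)).ne'
  have g2 : poch (1/2 + a) m ≠ 0 := (poch_pos (by positivity) m).ne'
  field_simp
noncomputable def Hterm (a b c x : ℝ) (m : ℕ) : ℝ :=
  poch a m * poch b m / (poch c m * (m.factorial : ℝ)) * x ^ m

lemma Hterm_nonneg {a b c x : ℝ} (ha : 0 < a) (hb : 0 < b) (hc : 0 < c)
    (hx : 0 ≤ x) (m : ℕ) : 0 ≤ Hterm a b c x m := by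
  have h1 := poch_pos ha m; have h2 := poch_pos hb m; have h3 := poch_pos hc m
  have h4 : (0:ℝ) < m.factorial := by exact_mod_cast m.factorial_pos
  unfold Hterm; positivity

lemma Hterm_zero (a b c x : ℝ) : Hterm a b c x 0 = 1 := by
  simp [Hterm, poch_zero]

lemma summable_Hterm {a b c x : ℝ} (ha : 0 < a) (hb : 0 < b) (hc : 0 < c)
    (hx0 : 0 ≤ x) (hx1 : x < 1) : Summable (Hterm a b c x) := by
  rcases eq_or_lt_of_le hx0 with h0 | h0
  · apply summable_of_ne_finset_zero (s := {0})
    intro m hm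
    have hm' : m ≠ 0 := by simpa using hm
    simp [Hterm, ← h0, zero_pow hm']
  · have hpos : ∀ m, 0 < Hterm a b c x m := by
      intro m
      have h1 := poch_pos ha m; have h2 := poch_pos hb m; have h3 := poch_pos hc m
      have h4 : (0:ℝ) < m.factorial := by exact_mod_cast m.factorial_pos
      unfold Hterm; positivity
    refine summable_of_ratio_test_tendsto_lt_one hx1
      (Eventually.of_forall (fun m => (hpos m).ne')) ?_
    have hform : ∀ m : ℕ, ‖Hterm a b c x (m+1)‖ / ‖Hterm a b c x m‖
        = x * ((a + m)/((m:ℝ)+1)) * ((b + m)/(c + m)) := by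
      intro m
      rw [Real.norm_eq_abs, Real.norm_eq_abs, abs_of_pos (hpos (m+1)),
        abs_of_pos (hpos m)]
      have h1 := poch_pos ha m; have h2 := poch_pos hb m; have h3 := poch_pos hc m
      have h4 : (0:ℝ) < m.factorial := by exact_mod_cast m.factorial_pos
      have ham : (0:ℝ) < a + m := by positivity
      have hbm : (0:ℝ) < b + m := by positivity
      have hcm : (0:ℝ) < c + m := by positivity
      have hm1 : (0:ℝ) < (m:ℝ) + 1 := by positivity
      unfold Hterm
      rw [poch_succ, poch_succ, poch_succ, Nat.factorial_succ]
      push_cast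
      field_simp
      ring
    simp_rw [hform]
    have l1 : Tendsto (fun m : ℕ => (a + m)/((m:ℝ)+1)) atTop (𝓝 1) := by
      have heq : ∀ m : ℕ, (a + m)/((m:ℝ)+1) = 1 + (a - 1)/((m:ℝ)+1) := by
        intro m
        have hm1 : ((m:ℝ)+1) ≠ 0 := by positivity
        field_simp
        ring
      simp_rw [heq]
      have : Tendsto (fun m : ℕ => (a - 1)/((m:ℝ)+1)) atTop (𝓝 0) :=
        Tendsto.div_atTop tendsto_const_nhds
          (tendsto_atTop_add_const_right _ 1 tendsto_natCast_atTop_atTop)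
      simpa using (tendsto_const_nhds (x := (1:ℝ))).add this
    have l2 : Tendsto (fun m : ℕ => (b + m)/(c + (m:ℝ))) atTop (𝓝 1) := by
      have heq : ∀ m : ℕ, (b + m)/(c + (m:ℝ)) = 1 + (b - c)/(c + (m:ℝ)) := by
        intro m
        have hm1 : (c + (m:ℝ)) ≠ 0 := by positivity
        field_simp
        ring
      simp_rw [heq]
      have : Tendsto (fun m : ℕ => (b - c)/(c + (m:ℝ))) atTop (𝓝 0) :=
        Tendsto.div_atTop tendsto_const_nhds
          (tendsto_atTop_add_const_left _ c tendsto_natCast_atTop_atTop)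
      simpa using (tendsto_const_nhds (x := (1:ℝ))).add this
    have := ((tendsto_const_nhds (x := x)).mul l1).mul l2
    simpa using this
/-- Real Beta integral over `Ioo 0 1`. -/
lemma real_beta_integral {u v : ℝ} (hu : 0 < u) (hv : 0 < v) :
    ∫ x in Ioo (0:ℝ) 1, x ^ (u - 1) * (1 - x) ^ (v - 1) = betaFn u v := by
  have hu' : 0 < (u : ℂ).re := by simpa using hu
  have hv' : 0 < (v : ℂ).re := by simpa using hv
  have key := Complex.Gamma_mul_Gamma_eq_betaIntegral hu' hv'
  have hGuv : Complex.Gamma ((u : ℂ) + v) ≠ 0 := by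
    rw [← Complex.ofReal_add, Complex.Gamma_ofReal]
    exact_mod_cast (Real.Gamma_pos_of_pos (by linarith : 0 < u + v)).ne'
  have h2 : Complex.betaIntegral u v
      = Complex.Gamma u * Complex.Gamma v / Complex.Gamma ((u : ℂ) + v) := by
    rw [key]; field_simp
  have hbeta : Complex.betaIntegral u v = ((betaFn u v : ℝ) : ℂ) := by
    rw [h2, betaFn, Complex.ofReal_div, Complex.ofReal_mul, ← Complex.Gamma_ofReal,
      ← Complex.Gamma_ofReal, ← Complex.Gamma_ofReal, Complex.ofReal_add]
  have hint : Complex.betaIntegral u v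
      = ((∫ x in Ioo (0:ℝ) 1, x ^ (u - 1) * (1 - x) ^ (v - 1) : ℝ) : ℂ) := by
    rw [Complex.betaIntegral, intervalIntegral.integral_of_le zero_le_one,
      integral_Ioc_eq_integral_Ioo]
    rw [show ((∫ x in Ioo (0:ℝ) 1, x ^ (u - 1) * (1 - x) ^ (v - 1) : ℝ) : ℂ)
        = ∫ x in Ioo (0:ℝ) 1, ((x ^ (u - 1) * (1 - x) ^ (v - 1) : ℝ) : ℂ) from
      integral_ofReal.symm]
    refine setIntegral_congr_fun measurableSet_Ioo (fun x hx => ?_)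
    have hx0 : (0:ℝ) ≤ x := hx.1.le
    have hx1 : (0:ℝ) ≤ 1 - x := by linarith [hx.2]
    have e1 : ((x:ℂ)) ^ ((u:ℂ) - 1) = ((x ^ (u - 1) : ℝ) : ℂ) := by
      rw [Complex.ofReal_cpow hx0]; push_cast; ring_nf
    have e2 : ((1 - (x:ℂ))) ^ ((v:ℂ) - 1) = (((1 - x) ^ (v - 1) : ℝ) : ℂ) := by
      rw [Complex.ofReal_cpow hx1]; push_cast; ring_nf
    rw [e1, e2, Complex.ofReal_mul]
  have := hint.symm.trans hbeta
  exact_mod_cast this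
lemma one_sub_sq_rpow_le {c ρ : ℝ} (hρ : ρ ∈ Ioo (-1:ℝ) 1) :
    (1 - ρ^2) ^ c ≤ (1 - ρ) ^ c + (1 + ρ) ^ c := by
  obtain ⟨h1, h2⟩ := hρ
  have ha : (0:ℝ) < 1 - ρ := by linarith
  have hb : (0:ℝ) < 1 + ρ := by linarith
  have hfac : 1 - ρ^2 = (1 - ρ) * (1 + ρ) := by ring
  have hpos : (0:ℝ) < 1 - ρ^2 := by nlinarith
  rcases le_or_gt 0 c with hc | hc
  · have hle1 : (1 - ρ^2) ^ c ≤ 1 :=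
      Real.rpow_le_one hpos.le (by nlinarith) hc
    rcases le_or_gt 0 ρ with hρ0 | hρ0
    · have : (1:ℝ) ≤ (1 + ρ) ^ c := Real.one_le_rpow (by linarith) hc
      have : (0:ℝ) ≤ (1 - ρ) ^ c := Real.rpow_nonneg ha.le c
      linarith [Real.one_le_rpow (by linarith : (1:ℝ) ≤ 1 + ρ) hc]
    · have h3 : (1:ℝ) ≤ (1 - ρ) ^ c := Real.one_le_rpow (by linarith) hc
      have h4 : (0:ℝ) ≤ (1 + ρ) ^ c := Real.rpow_nonneg hb.le c
      linarith
  · rw [hfac, Real.mul_rpow ha.le hb.le]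
    rcases le_or_gt 0 ρ with hρ0 | hρ0
    · have h3 : (1 + ρ) ^ c ≤ 1 :=
        Real.rpow_le_one_of_one_le_of_nonpos (by linarith) hc.le
      have h4 : (0:ℝ) ≤ (1 - ρ) ^ c := Real.rpow_nonneg ha.le c
      have h5 : (0:ℝ) ≤ (1 + ρ) ^ c := Real.rpow_nonneg hb.le c
      nlinarith
    · have h3 : (1 - ρ) ^ c ≤ 1 :=
        Real.rpow_le_one_of_one_le_of_nonpos (by linarith) hc.le
      have h4 : (0:ℝ) ≤ (1 - ρ) ^ c := Real.rpow_nonneg ha.le c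
      have h5 : (0:ℝ) ≤ (1 + ρ) ^ c := Real.rpow_nonneg hb.le c
      nlinarith

lemma integrableOn_base {c : ℝ} (hc : -1 < c) :
    IntegrableOn (fun ρ : ℝ => (1 - ρ^2) ^ c) (Ioo (-1:ℝ) 1) := by
  have hg1 : IntervalIntegrable (fun x : ℝ => (1 - x) ^ c) volume (-1) 1 := by
    have := (intervalIntegral.intervalIntegrable_rpow' (a := 0) (b := 2) hc).comp_sub_left 1
    norm_num at this
    exact this.symm
  have hg2 : IntervalIntegrable (fun x : ℝ => (1 + x) ^ c) volume (-1) 1 := by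
    have := (intervalIntegral.intervalIntegrable_rpow' (a := 0) (b := 2) hc).comp_add_left 1
    norm_num at this
    exact this
  have hg : IntegrableOn (fun x : ℝ => (1 - x) ^ c + (1 + x) ^ c) (Ioo (-1:ℝ) 1) := by
    have := (hg1.add hg2)
    rw [intervalIntegrable_iff_integrableOn_Ioo_of_le (by norm_num)] at this
    exact this
  refine Integrable.mono' hg ?_ ?_
  · refine (ContinuousOn.rpow_const ?_ ?_).aestronglyMeasurable measurableSet_Ioo
    · fun_prop
    · intro x hx
      exact Or.inl (by nlinarith [hx.1, hx.2])
  · filter_upwards [ae_restrict_mem measurableSet_Ioo] with ρ hρ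
    rw [Real.norm_eq_abs, abs_of_nonneg (Real.rpow_nonneg (by nlinarith [hρ.1, hρ.2]) c)]
    exact one_sub_sq_rpow_le hρ

lemma integrableOn_pow_mul {c : ℝ} (hc : -1 < c) (k : ℕ) :
    IntegrableOn (fun ρ : ℝ => ρ ^ k * (1 - ρ^2) ^ c) (Ioo (-1:ℝ) 1) := by
  refine Integrable.mono' (integrableOn_base hc) ?_ ?_
  · refine (ContinuousOn.mul (by fun_prop) (ContinuousOn.rpow_const ?_ ?_)).aestronglyMeasurable
      measurableSet_Ioo
    · fun_prop
    · intro x hx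
      exact Or.inl (by nlinarith [hx.1, hx.2])
  · filter_upwards [ae_restrict_mem measurableSet_Ioo] with ρ hρ
    have hpos : (0:ℝ) < 1 - ρ^2 := by nlinarith [hρ.1, hρ.2]
    rw [Real.norm_eq_abs, abs_mul, abs_of_nonneg (Real.rpow_nonneg hpos.le c)]
    have h1 : |ρ ^ k| ≤ 1 := by
      rw [abs_pow]
      exact pow_le_one₀ (abs_nonneg ρ) (abs_le.mpr ⟨hρ.1.le, hρ.2.le⟩)
    nlinarith [Real.rpow_nonneg hpos.le c, abs_nonneg (ρ ^ k)]
lemma odd_zero (c : ℝ) (m : ℕ) :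
    ∫ ρ in Ioo (-1:ℝ) 1, ρ ^ (2*m+1) * (1 - ρ^2) ^ c = 0 := by
  have h0 : (∫ ρ in Ioo (-1:ℝ) 1, ρ ^ (2*m+1) * (1 - ρ^2) ^ c)
      = ∫ ρ in (-1:ℝ)..1, ρ ^ (2*m+1) * (1 - ρ^2) ^ c := by
    rw [intervalIntegral.integral_of_le (by norm_num : (-1:ℝ) ≤ 1),
      integral_Ioc_eq_integral_Ioo]
  have h1 := intervalIntegral.integral_comp_neg
    (fun ρ : ℝ => ρ ^ (2*m+1) * (1 - ρ^2) ^ c) (a := -1) (b := 1)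
  simp only [neg_neg] at h1
  have h2 : ∀ x : ℝ, (-x) ^ (2*m+1) * (1 - (-x)^2) ^ c
      = -(x ^ (2*m+1) * (1 - x^2) ^ c) := by
    intro x
    rw [Odd.neg_pow ⟨m, by ring⟩, neg_sq]
    ring
  rw [h0]
  have h3 : (∫ x in (-1:ℝ)..1, (-x) ^ (2*m+1) * (1 - (-x)^2) ^ c)
      = -∫ x in (-1:ℝ)..1, x ^ (2*m+1) * (1 - x^2) ^ c := by
    simp_rw [h2]
    exact intervalIntegral.integral_neg
  rw [h3] at h1
  linarith

lemma even_beta {c : ℝ} (hc : -1 < c) (m : ℕ) :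
    ∫ ρ in Ioo (-1:ℝ) 1, ρ ^ (2*m) * (1 - ρ^2) ^ c
      = betaFn ((m:ℝ) + 1/2) (c + 1) := by
  set f : ℝ → ℝ := fun ρ => ρ ^ (2*m) * (1 - ρ^2) ^ c with hf
  have hInt : IntegrableOn f (Ioo (-1:ℝ) 1) := integrableOn_pow_mul hc (2*m)
  have hi1 : IntervalIntegrable f volume (-1) 0 := by
    rw [intervalIntegrable_iff_integrableOn_Ioo_of_le (by norm_num)]
    exact hInt.mono_set (Ioo_subset_Ioo le_rfl (by norm_num))
  have hi2 : IntervalIntegrable f volume 0 1 := by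
    rw [intervalIntegrable_iff_integrableOn_Ioo_of_le (by norm_num)]
    exact hInt.mono_set (Ioo_subset_Ioo (by norm_num) le_rfl)
  have heven : (∫ x in (-1:ℝ)..0, f x) = ∫ x in (0:ℝ)..1, f x := by
    have h1 := intervalIntegral.integral_comp_neg f (a := 0) (b := 1)
    have h2 : ∀ x : ℝ, f (-x) = f x := by
      intro x; simp only [hf]; rw [neg_pow, neg_sq]
      simp [pow_mul, neg_sq]
    simp_rw [h2] at h1
    simpa [neg_zero] using h1.symm
  have hsplit : (∫ ρ in Ioo (-1:ℝ) 1, f ρ) = 2 * ∫ x in Ioo (0:ℝ) 1, f x := by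
    rw [← integral_Ioc_eq_integral_Ioo,
      ← intervalIntegral.integral_of_le (by norm_num : (-1:ℝ) ≤ 1),
      ← intervalIntegral.integral_add_adjacent_intervals hi1 hi2, heven,
      intervalIntegral.integral_of_le (by norm_num : (0:ℝ) ≤ 1),
      integral_Ioc_eq_integral_Ioo]
    ring
  -- substitution t = ρ^2
  set g : ℝ → ℝ := (Ioo (0:ℝ) 1).indicator
    (fun t => t ^ ((m:ℝ) - 1/2) * (1 - t) ^ c) with hg
  have hsub := integral_comp_rpow_Ioi g (p := 2) two_ne_zero
  have hR : (∫ y in Ioi (0:ℝ), g y)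
      = ∫ t in Ioo (0:ℝ) 1, t ^ ((m:ℝ) - 1/2) * (1 - t) ^ c := by
    rw [hg, setIntegral_indicator measurableSet_Ioo,
      inter_eq_right.mpr Ioo_subset_Ioi_self]
  have hL : (∫ x in Ioi (0:ℝ), (|(2:ℝ)| * x ^ ((2:ℝ) - 1)) • g (x ^ (2:ℝ)))
      = ∫ x in Ioi (0:ℝ), (Ioo (0:ℝ) 1).indicator (fun x => 2 * f x) x := by
    refine setIntegral_congr_fun measurableSet_Ioi (fun x hx => ?_)
    have hx0 : (0:ℝ) < x := hx
    have hxsq : x ^ (2:ℝ) = x ^ 2 := by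
      rw [← Real.rpow_natCast x 2]; norm_num
    by_cases hx1 : x < 1
    · have hmem : x ∈ Ioo (0:ℝ) 1 := ⟨hx0, hx1⟩
      have hmem2 : x ^ (2:ℝ) ∈ Ioo (0:ℝ) 1 := by
        rw [hxsq]; exact ⟨by positivity, by nlinarith⟩
      rw [hg, indicator_of_mem hmem2, indicator_of_mem hmem]
      have hpow : (x ^ (2:ℝ)) ^ ((m:ℝ) - 1/2) = x ^ (2 * ((m:ℝ) - 1/2)) := by
        rw [← Real.rpow_mul hx0.le]
      rw [hpow, hxsq]
      have hxx : |(2:ℝ)| * x ^ ((2:ℝ)-1) = 2 * x := by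
        rw [show (2:ℝ) - 1 = 1 by norm_num, Real.rpow_one]
        norm_num
      rw [hxx, smul_eq_mul]
      simp only [hf]
      have key : x ^ (2 * ((m:ℝ) - 1/2)) * x = x ^ (2*m : ℕ) := by
        have h1 : x ^ (2 * ((m:ℝ) - 1/2)) * x ^ (1:ℝ)
            = x ^ (2 * ((m:ℝ) - 1/2) + 1) := (Real.rpow_add hx0 _ _).symm
        have h2 : 2 * ((m:ℝ) - 1/2) + 1 = ((2*m : ℕ) : ℝ) := by push_cast; ring
        rw [Real.rpow_one] at h1
        rw [h1, h2, Real.rpow_natCast]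
      linear_combination (2 * (1 - x^2) ^ c) * key
    · have hge : (1:ℝ) ≤ x := le_of_not_gt hx1
      have hnot : x ∉ Ioo (0:ℝ) 1 := fun h => absurd h.2 (not_lt.mpr hge)
      have hnot2 : x ^ (2:ℝ) ∉ Ioo (0:ℝ) 1 := by
        rw [hxsq]; intro h
        nlinarith [h.2]
      rw [hg, indicator_of_notMem hnot2, indicator_of_notMem hnot, smul_zero]
  have hL2 : (∫ x in Ioi (0:ℝ), (Ioo (0:ℝ) 1).indicator (fun x => 2 * f x) x)
      = 2 * ∫ x in Ioo (0:ℝ) 1, f x := by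
    rw [setIntegral_indicator measurableSet_Ioo,
      inter_eq_right.mpr Ioo_subset_Ioi_self, integral_const_mul]
  have hbeta : (∫ t in Ioo (0:ℝ) 1, t ^ ((m:ℝ) - 1/2) * (1 - t) ^ c)
      = betaFn ((m:ℝ) + 1/2) (c + 1) := by
    have := real_beta_integral (u := (m:ℝ) + 1/2) (v := c + 1)
      (by positivity) (by linarith)
    simp only [show ((m:ℝ) + 1/2) - 1 = (m:ℝ) - 1/2 by ring,
      show (c + 1) - 1 = c by ring] at this
    exact this
  rw [hsplit, ← hL2, ← hL, hsub, hR, hbeta]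

lemma twoF1_eq (a b c z : ℝ) : twoF1 a b c z = ∑' m, Hterm a b c z m := rfl

lemma twoF1_nonneg {a b c x : ℝ} (ha : 0 < a) (hb : 0 < b) (hc : 0 < c)
    (hx0 : 0 ≤ x) : 0 ≤ twoF1 a b c x :=
  tsum_nonneg (Hterm_nonneg ha hb hc hx0)

lemma one_le_twoF1 {a b c x : ℝ} (ha : 0 < a) (hb : 0 < b) (hc : 0 < c)
    (hx0 : 0 ≤ x) (hx1 : x < 1) : 1 ≤ twoF1 a b c x := by
  rw [twoF1_eq, ← Hterm_zero a b c x]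
  exact Summable.le_tsum (summable_Hterm ha hb hc hx0 hx1) 0
    (fun j _ => Hterm_nonneg ha hb hc hx0 j)

lemma twoF1_mono {a b c z x : ℝ} (ha : 0 < a) (hb : 0 < b) (hc : 0 < c)
    (hz0 : 0 ≤ z) (hzx : z ≤ x) (hx1 : x < 1) :
    twoF1 a b c z ≤ twoF1 a b c x := by
  rw [twoF1_eq, twoF1_eq]
  refine Summable.tsum_le_tsum (fun m => ?_)
    (summable_Hterm ha hb hc hz0 (lt_of_le_of_lt hzx hx1))
    (summable_Hterm ha hb hc (hz0.trans hzx) hx1)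
  unfold Hterm
  have h1 := poch_pos ha m; have h2 := poch_pos hb m; have h3 := poch_pos hc m
  have h4 : (0:ℝ) < m.factorial := by exact_mod_cast m.factorial_pos
  have h5 : z ^ m ≤ x ^ m := pow_le_pow_left₀ hz0 hzx m
  have h6 : (0:ℝ) ≤ poch a m * poch b m / (poch c m * (m.factorial : ℝ)) := by positivity
  exact mul_le_mul_of_nonneg_left h5 h6

lemma Hterm_shift {a b c1 c2 x : ℝ} (h1 : 0 < c1) (h2 : 0 < c2) (m : ℕ) :
    Hterm a b c1 x m * (poch c1 m / poch c2 m) = Hterm a b c2 x m := by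
  unfold Hterm
  have p1 := (poch_pos h1 m).ne'
  have p2 := (poch_pos h2 m).ne'
  have p4 : ((m.factorial : ℝ)) ≠ 0 := by
    exact_mod_cast m.factorial_pos.ne'
  field_simp

lemma Hterm_shift2 {b c x N : ℝ} (hN : 0 < N) (hc : 0 < c) (m : ℕ) :
    Hterm N N c x m * (poch b m / poch N m) = Hterm N b c x m := by
  unfold Hterm
  have p1 := (poch_pos hN m).ne'
  have p2 := (poch_pos hc m).ne'
  have p4 : ((m.factorial : ℝ)) ≠ 0 := by
    exact_mod_cast m.factorial_pos.ne'
  field_simp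

set_option maxHeartbeats 1000000 in
lemma main_integral (n : ℕ) (hn : 2 ≤ n) (r : ℝ)
    (hr : r ∈ Ioo (-1 : ℝ) 1) :
    (∫ ρ in Ioo (-1 : ℝ) 1,
        (1 - ρ ^ 2) ^ (((n : ℝ) - 3) / 2) *
          (twoF1 (((n : ℝ) - 1) / 2) (((n : ℝ) - 1) / 2) (1 / 2) (r ^ 2 * ρ ^ 2) +
            2 * r * ρ * Wgd 0 0 n *
              twoF1 ((n : ℝ) / 2) ((n : ℝ) / 2) (3 / 2) (r ^ 2 * ρ ^ 2))) =
        betaFn (1 / 2) (((n : ℝ) - 1) / 2) *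
          twoF1 (((n : ℝ) - 1) / 2) (((n : ℝ) - 1) / 2) ((n : ℝ) / 2) (r ^ 2) := by
  have hn2 : (2:ℝ) ≤ (n:ℝ) := by exact_mod_cast hn
  set a : ℝ := ((n : ℝ) - 1) / 2 with ha_def
  set N : ℝ := (n : ℝ) / 2 with hN_def
  set c : ℝ := ((n : ℝ) - 3) / 2 with hc_def
  set x : ℝ := r ^ 2 with hx_def
  set W : ℝ := Wgd 0 0 n with hW_def
  have ha : 0 < a := by rw [ha_def]; linarith
  have hN : 0 < N := by rw [hN_def]; linarith
  have hc1 : (-1:ℝ) < c := by rw [hc_def]; linarith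
  have hca : c + 1 = a := by rw [hc_def, ha_def]; ring
  have hNa : N = 1/2 + a := by rw [hN_def, ha_def]; ring
  have hx0 : 0 ≤ x := sq_nonneg r
  have hx1 : x < 1 := by
    have h1 := hr.1; have h2 := hr.2
    rw [hx_def]; nlinarith
  have h12 : (0:ℝ) < 1/2 := by norm_num
  have h32 : (0:ℝ) < 3/2 := by norm_num
  set J : ℕ → ℝ := fun m => betaFn ((m:ℝ) + 1/2) a with hJ_def
  have hJ : ∀ m, (∫ ρ in Ioo (-1:ℝ) 1, ρ ^ (2*m) * (1 - ρ^2) ^ c) = J m := by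
    intro m; rw [even_beta hc1 m, hca]
  have hJeq : ∀ m, J m = betaFn (1/2) a * (poch (1/2) m / poch N m) := by
    intro m; rw [hJ_def]
    simp only
    rw [beta_ratio ha m, hNa]
  set u : ℕ → ℝ → ℝ := fun m ρ =>
    Hterm a a (1/2) x m * (ρ ^ (2*m) * (1 - ρ^2) ^ c) +
      (2*r*W*Hterm N N (3/2) x m) * (ρ ^ (2*m+1) * (1 - ρ^2) ^ c) with hu_def
  have hu : ∀ m, IntegrableOn (u m) (Ioo (-1:ℝ) 1) := by
    intro m
    exact ((integrableOn_pow_mul hc1 (2*m)).const_mul _).add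
      ((integrableOn_pow_mul hc1 (2*m+1)).const_mul _)
  -- pointwise identity
  have hpt : ∀ ρ ∈ Ioo (-1:ℝ) 1,
      (1 - ρ^2) ^ c * (twoF1 a a (1/2) (x * ρ^2) +
        2*r*ρ*W * twoF1 N N (3/2) (x * ρ^2)) = ∑' m, u m ρ := by
    intro ρ hρ
    have hρ2 : ρ^2 ≤ 1 := by nlinarith [hρ.1, hρ.2]
    have hz0 : 0 ≤ x * ρ^2 := by positivity
    have hz1 : x * ρ^2 < 1 := by nlinarith
    have hS1 := (summable_Hterm ha ha h12 hz0 hz1).mul_left ((1 - ρ^2) ^ c)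
    have hS2 := (summable_Hterm hN hN h32 hz0 hz1).mul_left (2*r*W*ρ*(1 - ρ^2) ^ c)
    have hterm : ∀ m, u m ρ =
        (1 - ρ^2) ^ c * Hterm a a (1/2) (x * ρ^2) m +
          (2*r*W*ρ*(1 - ρ^2) ^ c) * Hterm N N (3/2) (x * ρ^2) m := by
      intro m
      simp only [hu_def, Hterm, mul_pow]
      ring
    rw [twoF1_eq, twoF1_eq,
      show (∑' m, u m ρ) = ∑' m,
        ((1 - ρ^2) ^ c * Hterm a a (1/2) (x * ρ^2) m +
          (2*r*W*ρ*(1 - ρ^2) ^ c) * Hterm N N (3/2) (x * ρ^2) m) from tsum_congr hterm,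
      Summable.tsum_add hS1 hS2, tsum_mul_left, tsum_mul_left]
    ring
  -- bound on norms of integrals
  have hbound : ∀ m, (∫ ρ in Ioo (-1:ℝ) 1, ‖u m ρ‖) ≤
      Hterm a a (1/2) x m * J m + |2*r*W| * Hterm N N (3/2) x m * J m := by
    intro m
    have hi1 : IntegrableOn (fun ρ : ℝ => ρ ^ (2*m) * (1 - ρ^2) ^ c) (Ioo (-1:ℝ) 1) :=
      integrableOn_pow_mul hc1 (2*m)
    have hi2 : IntegrableOn (fun ρ : ℝ => ρ ^ (2*m+1) * (1 - ρ^2) ^ c) (Ioo (-1:ℝ) 1) :=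
      integrableOn_pow_mul hc1 (2*m+1)
    set C1 : ℝ := Hterm a a (1/2) x m with hC1
    set C2 : ℝ := 2*r*W*Hterm N N (3/2) x m with hC2
    have step1 : (∫ ρ in Ioo (-1:ℝ) 1, ‖u m ρ‖) ≤
        ∫ ρ in Ioo (-1:ℝ) 1,
          (‖C1‖ * ‖ρ ^ (2*m) * (1 - ρ^2) ^ c‖ + ‖C2‖ * ‖ρ ^ (2*m+1) * (1 - ρ^2) ^ c‖) := by
      refine integral_mono (hu m).norm
        ((hi1.norm.const_mul _).add (hi2.norm.const_mul _)) (fun ρ => ?_)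
      simp only [hu_def, ← hC1, ← hC2]
      refine (norm_add_le _ _).trans (le_of_eq ?_)
      rw [norm_mul C1, norm_mul C2]
    have step2 : (∫ ρ in Ioo (-1:ℝ) 1,
          (‖C1‖ * ‖ρ ^ (2*m) * (1 - ρ^2) ^ c‖ + ‖C2‖ * ‖ρ ^ (2*m+1) * (1 - ρ^2) ^ c‖)) =
        ‖C1‖ * (∫ ρ in Ioo (-1:ℝ) 1, ‖ρ ^ (2*m) * (1 - ρ^2) ^ c‖) +
          ‖C2‖ * (∫ ρ in Ioo (-1:ℝ) 1, ‖ρ ^ (2*m+1) * (1 - ρ^2) ^ c‖) := by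
      rw [integral_add (hi1.norm.const_mul _) (hi2.norm.const_mul _),
        integral_const_mul, integral_const_mul]
    have step3 : (∫ ρ in Ioo (-1:ℝ) 1, ‖ρ ^ (2*m) * (1 - ρ^2) ^ c‖) = J m := by
      rw [← hJ m]
      refine setIntegral_congr_fun measurableSet_Ioo (fun ρ hρ => ?_)
      have h1 : (0:ℝ) ≤ ρ ^ (2*m) := by rw [pow_mul]; positivity
      have h2 : (0:ℝ) ≤ (1 - ρ^2) ^ c :=
        Real.rpow_nonneg (by nlinarith [hρ.1, hρ.2]) c
      rw [Real.norm_eq_abs, abs_of_nonneg (by positivity)]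
    have step4 : (∫ ρ in Ioo (-1:ℝ) 1, ‖ρ ^ (2*m+1) * (1 - ρ^2) ^ c‖) ≤ J m := by
      rw [← hJ m]
      refine setIntegral_mono_on hi2.norm hi1 measurableSet_Ioo (fun ρ hρ => ?_)
      have habs : |ρ| ≤ 1 := abs_le.mpr ⟨hρ.1.le, hρ.2.le⟩
      have hrc : (0:ℝ) ≤ (1 - ρ^2) ^ c :=
        Real.rpow_nonneg (by nlinarith [hρ.1, hρ.2]) c
      have h1 : |ρ ^ (2*m+1)| = |ρ| ^ (2*m) * |ρ| := by rw [abs_pow, pow_succ]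
      have h2 : |ρ| ^ (2*m) = ρ ^ (2*m) := by rw [pow_mul, pow_mul, sq_abs]
      have h3 : |ρ ^ (2*m+1)| ≤ ρ ^ (2*m) := by
        rw [h1, h2]
        have h4 : (0:ℝ) ≤ ρ ^ (2*m) := by rw [pow_mul]; positivity
        nlinarith [abs_nonneg ρ]
      rw [Real.norm_eq_abs, abs_mul, abs_of_nonneg hrc]
      exact mul_le_mul_of_nonneg_right h3 hrc
    have hJm_pos : 0 < J m := betaFn_pos (by positivity) ha
    have hC1abs : ‖C1‖ = C1 := by
      rw [Real.norm_eq_abs]; exact abs_of_nonneg (Hterm_nonneg ha ha h12 hx0 m)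
    have hC2abs : ‖C2‖ = |2*r*W| * Hterm N N (3/2) x m := by
      rw [Real.norm_eq_abs, hC2, abs_mul, abs_of_nonneg (Hterm_nonneg hN hN h32 hx0 m)]
    have step5 : ‖C1‖ * (∫ ρ in Ioo (-1:ℝ) 1, ‖ρ ^ (2*m) * (1 - ρ^2) ^ c‖) +
          ‖C2‖ * (∫ ρ in Ioo (-1:ℝ) 1, ‖ρ ^ (2*m+1) * (1 - ρ^2) ^ c‖)
        ≤ C1 * J m + |2*r*W| * Hterm N N (3/2) x m * J m := by
      rw [step3, hC1abs, hC2abs]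
      have h5 := mul_le_mul_of_nonneg_left step4
        (mul_nonneg (abs_nonneg (2*r*W)) (Hterm_nonneg hN hN h32 hx0 m))
      exact add_le_add le_rfl h5
    exact step1.trans ((le_of_eq step2).trans step5)
  have hvsum : Summable (fun m =>
      Hterm a a (1/2) x m * J m + |2*r*W| * Hterm N N (3/2) x m * J m) := by
    have hfun : (fun m =>
        Hterm a a (1/2) x m * J m + |2*r*W| * Hterm N N (3/2) x m * J m) =
        fun m => betaFn (1/2) a * Hterm a a N x m +
          (|2*r*W| * betaFn (1/2) a) * Hterm N (1/2) (3/2) x m := by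
      funext m
      rw [hJeq m]
      have e1 := Hterm_shift (a := a) (b := a) (x := x) h12 hN m
      have e2 := Hterm_shift2 (b := (1/2:ℝ)) (c := (3/2:ℝ)) (x := x) hN h32 m
      linear_combination (betaFn (1/2) a) * e1 + (|2*r*W| * betaFn (1/2) a) * e2
    rw [hfun]
    exact ((summable_Hterm ha ha hN hx0 hx1).mul_left _).add
      ((summable_Hterm hN h12 h32 hx0 hx1).mul_left _)
  have hsummable_norm : Summable (fun m => ∫ ρ in Ioo (-1:ℝ) 1, ‖u m ρ‖) :=
    Summable.of_nonneg_of_le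
      (fun m => integral_nonneg (fun ρ => norm_nonneg _)) hbound hvsum
  have hswap := MeasureTheory.integral_tsum_of_summable_integral_norm hu hsummable_norm
  have hval : ∀ m, (∫ ρ in Ioo (-1:ℝ) 1, u m ρ) =
      betaFn (1/2) a * Hterm a a N x m := by
    intro m
    have : (∫ ρ in Ioo (-1:ℝ) 1, u m ρ) =
        Hterm a a (1/2) x m * (∫ ρ in Ioo (-1:ℝ) 1, ρ ^ (2*m) * (1 - ρ^2) ^ c) +
        (2*r*W*Hterm N N (3/2) x m) *
          (∫ ρ in Ioo (-1:ℝ) 1, ρ ^ (2*m+1) * (1 - ρ^2) ^ c) := by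
      simp only [hu_def]
      rw [integral_add ((integrableOn_pow_mul hc1 (2*m)).const_mul _)
        ((integrableOn_pow_mul hc1 (2*m+1)).const_mul _),
        integral_const_mul, integral_const_mul]
    rw [this, hJ m, odd_zero c m, mul_zero, add_zero, hJeq m]

    have e1 := Hterm_shift (a := a) (b := a) (x := x) h12 hN m
    linear_combination (betaFn (1/2) a) * e1
  have hfinal : (∑' m, ∫ ρ in Ioo (-1:ℝ) 1, u m ρ) = betaFn (1/2) a * twoF1 a a N x := by
    rw [show (∑' m, ∫ ρ in Ioo (-1:ℝ) 1, u m ρ)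
        = ∑' m, betaFn (1/2) a * Hterm a a N x m from tsum_congr hval,
      tsum_mul_left, twoF1_eq]
  rw [← hfinal, hswap]
  exact setIntegral_congr_fun measurableSet_Ioo (fun ρ hρ => (hpt ρ hρ))

/-- Normalization of Lindley's reference posterior for `ρ` (the case
`α → 0`, `β = γ = δ = 0`). -/
theorem lindley_posterior_normalization (n : ℕ) (hn : 2 ≤ n) (r : ℝ)
    (hr : r ∈ Ioo (-1 : ℝ) 1) :
    (∫ ρ in Ioo (-1 : ℝ) 1,
        (1 - ρ ^ 2) ^ (((n : ℝ) - 3) / 2) *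
          (twoF1 (((n : ℝ) - 1) / 2) (((n : ℝ) - 1) / 2) (1 / 2) (r ^ 2 * ρ ^ 2) +
            2 * r * ρ * Wgd 0 0 n *
              twoF1 ((n : ℝ) / 2) ((n : ℝ) / 2) (3 / 2) (r ^ 2 * ρ ^ 2))) =
        betaFn (1 / 2) (((n : ℝ) - 1) / 2) *
          twoF1 (((n : ℝ) - 1) / 2) (((n : ℝ) - 1) / 2) ((n : ℝ) / 2) (r ^ 2) ∧
      (∫ ρ in Ioo (-1 : ℝ) 1,
          (1 - ρ ^ 2) ^ (((n : ℝ) - 3) / 2) *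
            (twoF1 (((n : ℝ) - 1) / 2) (((n : ℝ) - 1) / 2) (1 / 2) (r ^ 2 * ρ ^ 2) +
              2 * r * ρ * Wgd 0 0 n *
                twoF1 ((n : ℝ) / 2) ((n : ℝ) / 2) (3 / 2) (r ^ 2 * ρ ^ 2)) /
            (betaFn (1 / 2) (((n : ℝ) - 1) / 2) *
              twoF1 (((n : ℝ) - 1) / 2) (((n : ℝ) - 1) / 2) ((n : ℝ) / 2) (r ^ 2))) = 1 := by
  have h1 := main_integral n hn r hr
  have hn2 : (2:ℝ) ≤ (n:ℝ) := by exact_mod_cast hn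
  have ha : (0:ℝ) < ((n:ℝ) - 1) / 2 := by linarith
  have hx1 : r ^ 2 < 1 := by nlinarith [hr.1, hr.2]
  have hD : betaFn (1/2) (((n:ℝ) - 1) / 2) *
      twoF1 (((n:ℝ) - 1) / 2) (((n:ℝ) - 1) / 2) ((n:ℝ) / 2) (r ^ 2) ≠ 0 := by
    have hb := betaFn_pos (by norm_num : (0:ℝ) < 1/2) ha
    have hF := one_le_twoF1 ha ha (by linarith : (0:ℝ) < (n:ℝ)/2) (sq_nonneg r) hx1
    exact mul_ne_zero hb.ne' (by linarith)
  refine ⟨h1, ?_⟩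
  rw [integral_div, h1, div_self hD]
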